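/- For a Three Hat configuration [a,b,c] with a pairwise coprime, the iteration of σ starting from [a,b,c] terminates in one of the base configurations [1,1,2], [1,2,1], [2,1,1]. -/

import Mathlib

/-- A Three Hat configuration: a triple of positive integers in which
one entry equals the sum of the other two. -/
def ThreeHat.IsConfig (s : ℕ × ℕ × ℕ) : Prop :=
  0 < s.1 ∧ 0 < s.2.1 ∧ 0 < s.2.2 ∧
    (s.1 = s.2.1 + s.2.2 ∨ s.2.1 = s.1 + s.2.2 ∨ s.2.2 = s.1 + s.2.1)

/-- A base configuration: two of the entries are equal. -/
def ThreeHat.IsBase (s : ℕ × ℕ × ℕ) : Prop :=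
  s.1 = s.2.1 ∨ s.1 = s.2.2 ∨ s.2.1 = s.2.2

/-- The reduction map σ: fixes base configurations, otherwise replaces the
largest entry by the difference of the other two. -/
def ThreeHat.step (s : ℕ × ℕ × ℕ) : ℕ × ℕ × ℕ :=
  let a := s.1; let b := s.2.1; let c := s.2.2
  if a = b ∨ a = c ∨ b = c then s
  else if b < a ∧ c < a then (max b c - min b c, b, c)
  else if a < b ∧ c < b then (a, max a c - min a c, c)
  else (a, b, max a b - min a b)

/-- The maximum entry of a configuration. -/
def ThreeHat.max3 (s : ℕ × ℕ × ℕ) : ℕ := max s.1 (max s.2.1 s.2.2)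

/-! Replacing the largest entry of a configuration by the difference of the other two keeps
a configuration, keeps the entries pairwise coprime (since `gcd (x - y, y) = gcd (x, y)`), and
strictly lowers the largest entry unless the configuration is a base one, because the largest entry
of a non-base configuration is the sum of the other two. So the iteration reaches a base
configuration `(x, x, 2x)` up to order, and coprimality of the two equal entries forces `x = 1`. -/

theorem Nat.Coprime.max_sub_min {b c : ℕ} (h : Nat.Coprime b c) :
    Nat.Coprime (max b c - min b c) b ∧ Nat.Coprime (max b c - min b c) c := by
  rcases le_total b c with hle | hle
  · rw [max_eq_right hle, min_eq_left hle]
    exact ⟨(Nat.coprime_sub_self_left hle).2 h.symm, (Nat.coprime_self_sub_left hle).2 h⟩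
  · rw [max_eq_left hle, min_eq_right hle]
    exact ⟨(Nat.coprime_self_sub_left hle).2 h.symm, (Nat.coprime_sub_self_left hle).2 h⟩

namespace ThreeHat

def PairwiseCoprime (s : ℕ × ℕ × ℕ) : Prop :=
  Nat.Coprime s.1 s.2.1 ∧ Nat.Coprime s.1 s.2.2 ∧ Nat.Coprime s.2.1 s.2.2

theorem isConfig_step {s : ℕ × ℕ × ℕ} (h : IsConfig s) : IsConfig (step s) := by
  obtain ⟨a, b, c⟩ := s
  simp only [IsConfig, step] at h ⊢
  split_ifs <;> dsimp only <;> omega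

theorem max3_step_lt {s : ℕ × ℕ × ℕ} (h : IsConfig s) (hB : ¬IsBase s) :
    max3 (step s) < max3 s := by
  obtain ⟨a, b, c⟩ := s
  simp only [IsConfig, IsBase, step, max3] at h hB ⊢
  split_ifs <;> dsimp only <;> omega

theorem pairwiseCoprime_step {s : ℕ × ℕ × ℕ} (h : PairwiseCoprime s) :
    PairwiseCoprime (step s) := by
  obtain ⟨a, b, c⟩ := s
  obtain ⟨hab, hac, hbc⟩ := h
  simp only [step]
  split_ifs
  · exact ⟨hab, hac, hbc⟩
  · exact ⟨hbc.max_sub_min.1, hbc.max_sub_min.2, hbc⟩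
  · exact ⟨hac.max_sub_min.1.symm, hac, hac.max_sub_min.2⟩
  · exact ⟨hab, hab.max_sub_min.1.symm, hab.max_sub_min.2.symm⟩

theorem exists_iterate_isBase {s : ℕ × ℕ × ℕ} (h : IsConfig s) : ∃ n, IsBase (step^[n] s) := by
  by_cases hB : IsBase s
  · exact ⟨0, hB⟩
  · obtain ⟨n, hn⟩ := exists_iterate_isBase (isConfig_step h)
    exact ⟨n + 1, hn⟩
termination_by max3 s
decreasing_by exact max3_step_lt h hB

theorem eq_of_isBase {s : ℕ × ℕ × ℕ} (h : IsConfig s) (hc : PairwiseCoprime s) (hB : IsBase s) :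
    s = (1, 1, 2) ∨ s = (1, 2, 1) ∨ s = (2, 1, 1) := by
  obtain ⟨a, b, c⟩ := s
  obtain ⟨hab, hac, hbc⟩ : Nat.Coprime a b ∧ Nat.Coprime a c ∧ Nat.Coprime b c := hc
  simp only [IsConfig, IsBase, Prod.mk.injEq] at h hB ⊢
  rcases hB with rfl | rfl | rfl
  · have := (Nat.coprime_self _).1 hab; omega
  · have := (Nat.coprime_self _).1 hac; omega
  · have := (Nat.coprime_self _).1 hbc; omega

end ThreeHat

theorem three_hat_coprime_terminal (s : ℕ × ℕ × ℕ) (h : ThreeHat.IsConfig s)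
    (hab : Nat.Coprime s.1 s.2.1) (hac : Nat.Coprime s.1 s.2.2)
    (hbc : Nat.Coprime s.2.1 s.2.2) :
    ∃ n : ℕ, ThreeHat.step^[n] s = (1, 1, 2) ∨ ThreeHat.step^[n] s = (1, 2, 1) ∨
      ThreeHat.step^[n] s = (2, 1, 1) := by
  obtain ⟨n, hB⟩ := ThreeHat.exists_iterate_isBase h
  refine ⟨n, ThreeHat.eq_of_isBase ?_ ?_ hB⟩
  · exact Function.Iterate.rec ThreeHat.IsConfig h (fun _ => ThreeHat.isConfig_step) n
  · exact Function.Iterate.rec ThreeHat.PairwiseCoprime ⟨hab, hac, hbc⟩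
      (fun _ => ThreeHat.pairwiseCoprime_step) n
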